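/- arXiv:1905.07678 — 2 statements merged into one kernel-verified Lean document; each statement's English description precedes it below -/
import Mathlib

section
/- Let a, b ∈ ℝ⁴ be nonnegative and z ∈ ℂ⁴ with √(aᵢbᵢ) = |zᵢ| = 1 for all i ∈ {1,2,3,4}. Suppose (a,b,z) = (a',b',z') + (a'',b'',z'') where both summands have nonnegative a-,b-components and satisfy min{√(aᵢbᵢ), √(aⱼbⱼ)} ≥ max{|zᵢ|, |zⱼ|} for all i ≠ j. Then one summand is a nonnegative scalar multiple of the other. -/
/-!
Write `t i = √(a' i b' i)` and `s i = √(a'' i b'' i)`. Applied to two distinct indices, `S₁`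
bounds `‖z' i‖ ≤ t i` and `‖z'' i‖ ≤ s i`, so `1 = ‖z i‖ ≤ t i + s i`. On the other hand
`(t i + s i)² + (√(a' i b'' i) - √(a'' i b' i))² = a i b i = 1`, so every inequality is an
equality: `t i + s i = 1`, the cross terms agree, and `a' i b i = a i b' i = t i`, i.e.
`a' i = t i a i` and `b' i = t i b i`. Equality in the triangle inequality in `ℂ` gives
`z' i = t i z i`, and `‖z' i‖ = t i` turns `S₁` into `t i ≤ t j` for all `i ≠ j`, so `t` is
constant, and the summands are `T • (a, b, z)` and `(1 - T) • (a, b, z)` with `T ∈ [0, 1]`.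
-/

section MinGeMax

variable {ι : Type*} {t n : ι → ℝ}

theorem le_of_forall_min_ge_max [Nontrivial ι]
    (h : ∀ i j, i ≠ j → min (t i) (t j) ≥ max (n i) (n j)) (i : ι) : n i ≤ t i := by
  obtain ⟨j, hij⟩ := exists_ne i
  exact (le_max_left _ _).trans <| (h i j hij.symm).trans (min_le_left _ _)

theorem eq_of_forall_min_ge_max (h : ∀ i j, i ≠ j → min (t i) (t j) ≥ max (n i) (n j))
    (hle : ∀ i, t i ≤ n i) (i j : ι) : t i = t j := by
  have hmono : ∀ i j, i ≠ j → t i ≤ t j := fun i j hij =>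
    (hle i).trans <| (le_max_left _ _).trans <| (h i j hij).trans (min_le_right _ _)
  rcases eq_or_ne i j with rfl | hij
  · rfl
  · exact (hmono i j hij).antisymm (hmono j i hij.symm)

end MinGeMax

section GeometricMean

variable {a₁ b₁ a₂ b₂ : ℝ}

theorem sqrt_mul_mul_sqrt_mul_swap (ha₁ : 0 ≤ a₁) (hb₁ : 0 ≤ b₁) (hb₂ : 0 ≤ b₂) :
    √(a₁ * b₂) * √(a₂ * b₁) = √(a₁ * b₁) * √(a₂ * b₂) := by
  rw [← Real.sqrt_mul (by positivity), ← Real.sqrt_mul (by positivity)]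
  congr 1
  ring

theorem sq_sqrt_mul_add_sqrt_mul_add_sq_sub (ha₁ : 0 ≤ a₁) (hb₁ : 0 ≤ b₁) (ha₂ : 0 ≤ a₂)
    (hb₂ : 0 ≤ b₂) :
    (√(a₁ * b₁) + √(a₂ * b₂)) ^ 2 + (√(a₁ * b₂) - √(a₂ * b₁)) ^ 2 = (a₁ + a₂) * (b₁ + b₂) := by
  have h11 := Real.sq_sqrt (mul_nonneg ha₁ hb₁)
  have h22 := Real.sq_sqrt (mul_nonneg ha₂ hb₂)
  have h12 := Real.sq_sqrt (mul_nonneg ha₁ hb₂)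
  have h21 := Real.sq_sqrt (mul_nonneg ha₂ hb₁)
  linear_combination h11 + h22 + h12 + h21 - 2 * sqrt_mul_mul_sqrt_mul_swap (a₂ := a₂) ha₁ hb₁ hb₂

/-- The equality case of `√(a₁ b₁) + √(a₂ b₂) ≤ √((a₁ + a₂)(b₁ + b₂))`, normalised to
`(a₁ + a₂)(b₁ + b₂) = 1`. -/
theorem sqrt_mul_add_sqrt_mul_eq_one (ha₁ : 0 ≤ a₁) (hb₁ : 0 ≤ b₁) (ha₂ : 0 ≤ a₂)
    (hb₂ : 0 ≤ b₂) (hab : (a₁ + a₂) * (b₁ + b₂) = 1) (hge : 1 ≤ √(a₁ * b₁) + √(a₂ * b₂)) :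
    √(a₁ * b₁) + √(a₂ * b₂) = 1 ∧ a₁ = √(a₁ * b₁) * (a₁ + a₂) ∧
      b₁ = √(a₁ * b₁) * (b₁ + b₂) := by
  have hid := sq_sqrt_mul_add_sqrt_mul_add_sq_sub ha₁ hb₁ ha₂ hb₂
  have hcross := sqrt_mul_mul_sqrt_mul_swap ha₁ hb₁ hb₂ (a₂ := a₂)
  set t := √(a₁ * b₁)
  set s := √(a₂ * b₂)
  set p := √(a₁ * b₂)
  set q := √(a₂ * b₁)
  have hts : t + s = 1 := by nlinarith [sq_nonneg (p - q)]
  have hpq : p = q := by nlinarith [sq_nonneg (p - q)]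
  have hp : a₁ * b₂ = t * s := by
    rw [← hcross, ← hpq]; exact (Real.mul_self_sqrt (mul_nonneg ha₁ hb₂)).symm
  have hq : a₂ * b₁ = t * s := by
    rw [← hcross, hpq]; exact (Real.mul_self_sqrt (mul_nonneg ha₂ hb₁)).symm
  have ht : t ^ 2 = a₁ * b₁ := Real.sq_sqrt (mul_nonneg ha₁ hb₁)
  refine ⟨hts, ?_, ?_⟩
  · linear_combination (-a₁) * hab - (a₁ + a₂) * ht + (a₁ + a₂) * hp + (a₁ + a₂) * t * hts
  · linear_combination (-b₁) * hab - (b₁ + b₂) * ht + (b₁ + b₂) * hq + (b₁ + b₂) * t * hts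

end GeometricMean

theorem smul_eq_norm_smul_add_of_norm_add_eq {E : Type*} [NormedAddCommGroup E]
    [NormedSpace ℝ E] [StrictConvexSpace ℝ E] {x y : E} (h : ‖x + y‖ = ‖x‖ + ‖y‖) :
    ‖x + y‖ • x = ‖x‖ • (x + y) := by
  have hray : ‖x‖ • y = ‖y‖ • x := sameRay_iff_norm_smul_eq.mp (sameRay_iff_norm_add.mpr h)
  rw [h, smul_add, hray, ← add_smul]

theorem exists_nonneg_smul_of_eq_smul_of_eq_add {M : Type*} [AddCommGroup M] [Module ℝ M]
    {x x' x'' : M} {T : ℝ} (hT₀ : 0 ≤ T) (hT₁ : T ≤ 1) (hx : x = x' + x'') (hx' : x' = T • x) :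
    ∃ c : ℝ, 0 ≤ c ∧ (x' = c • x'' ∨ x'' = c • x') := by
  have hx'' : x'' = (1 - T) • x := by rw [sub_smul, one_smul, ← hx', hx, add_sub_cancel_left]
  rcases hT₁.lt_or_eq with hlt | rfl
  · refine ⟨T / (1 - T), div_nonneg hT₀ (sub_nonneg.mpr hT₁), Or.inl ?_⟩
    rw [hx'', smul_smul, div_mul_cancel₀ _ (sub_ne_zero.mpr hlt.ne'), hx']
  · exact ⟨0, le_rfl, Or.inr (by rw [hx'', sub_self, zero_smul, zero_smul])⟩

theorem extreme_S3e_in_PPT_general (a b a' b' a'' b'' : Fin 4 → ℝ) (z z' z'' : Fin 4 → ℂ)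
    (hunit : ∀ i, Real.sqrt (a i * b i) = 1 ∧ ‖z i‖ = 1)
    (ha' : ∀ i, 0 ≤ a' i) (hb' : ∀ i, 0 ≤ b' i)
    (ha'' : ∀ i, 0 ≤ a'' i) (hb'' : ∀ i, 0 ≤ b'' i)
    (hsum : a = a' + a'' ∧ b = b' + b'' ∧ z = z' + z'')
    (hS1' : ∀ i j : Fin 4, i ≠ j →
      min (Real.sqrt (a' i * b' i)) (Real.sqrt (a' j * b' j)) ≥
        max (‖z' i‖) (‖z' j‖))
    (hS1'' : ∀ i j : Fin 4, i ≠ j →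
      min (Real.sqrt (a'' i * b'' i)) (Real.sqrt (a'' j * b'' j)) ≥
        max (‖z'' i‖) (‖z'' j‖)) :
    ∃ c : ℝ, 0 ≤ c ∧
      ((a' = c • a'' ∧ b' = c • b'' ∧ z' = (c : ℝ) • z'') ∨
       (a'' = c • a' ∧ b'' = c • b' ∧ z'' = (c : ℝ) • z')) := by
  obtain ⟨rfl, rfl, rfl⟩ := hsum
  have hz' : ∀ i, ‖z' i‖ ≤ √(a' i * b' i) := le_of_forall_min_ge_max hS1'
  have hz'' : ∀ i, ‖z'' i‖ ≤ √(a'' i * b'' i) := le_of_forall_min_ge_max hS1''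
  have htri : ∀ i, ‖z' i + z'' i‖ ≤ ‖z' i‖ + ‖z'' i‖ := fun i => norm_add_le _ _
  have hone : ∀ i, ‖z' i + z'' i‖ = 1 := fun i => (hunit i).2
  have hkey := fun i => sqrt_mul_add_sqrt_mul_eq_one (ha' i) (hb' i) (ha'' i) (hb'' i)
    (Real.sqrt_eq_one.mp (hunit i).1) (by linarith [htri i, hone i, hz' i, hz'' i])
  have hnorm_add : ∀ i, ‖z' i + z'' i‖ = ‖z' i‖ + ‖z'' i‖ := fun i => by
    linarith [htri i, hone i, hz' i, hz'' i, (hkey i).1]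
  have hnorm : ∀ i, ‖z' i‖ = √(a' i * b' i) := fun i => by
    linarith [hnorm_add i, hone i, hz' i, hz'' i, (hkey i).1]
  have hconst : ∀ i, √(a' i * b' i) = √(a' 0 * b' 0) :=
    fun i => eq_of_forall_min_ge_max hS1' (fun i => (hnorm i).ge) i 0
  have hsplit : ((a', b', z') : (Fin 4 → ℝ) × (Fin 4 → ℝ) × (Fin 4 → ℂ)) =
      √(a' 0 * b' 0) • (a' + a'', b' + b'', z' + z'') := by
    refine Prod.ext (funext fun i => ?_) (Prod.ext (funext fun i => ?_) (funext fun i => ?_))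
    · exact hconst i ▸ (hkey i).2.1
    · exact hconst i ▸ (hkey i).2.2
    · have h := smul_eq_norm_smul_add_of_norm_add_eq (hnorm_add i)
      rwa [hone i, one_smul, hnorm i, hconst i] at h
  obtain ⟨c, hc, hcases⟩ := exists_nonneg_smul_of_eq_smul_of_eq_add (x'' := (a'', b'', z''))
    (Real.sqrt_nonneg _) (by linarith [(hkey 0).1, Real.sqrt_nonneg (a'' 0 * b'' 0)]) rfl hsplit
  exact ⟨c, hc, by simpa only [Prod.smul_mk, Prod.mk.injEq] using hcases⟩

theorem extreme_S3e_in_PPT (a b a' b' a'' b'' : Fin 4 → ℝ) (z z' z'' : Fin 4 → ℂ)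
    (ha : ∀ i, 0 ≤ a i) (hb : ∀ i, 0 ≤ b i)
    (hunit : ∀ i, Real.sqrt (a i * b i) = 1 ∧ ‖z i‖ = 1)
    (ha' : ∀ i, 0 ≤ a' i) (hb' : ∀ i, 0 ≤ b' i)
    (ha'' : ∀ i, 0 ≤ a'' i) (hb'' : ∀ i, 0 ≤ b'' i)
    (hsum : a = a' + a'' ∧ b = b' + b'' ∧ z = z' + z'')
    (hS1' : ∀ i j : Fin 4, i ≠ j →
      min (Real.sqrt (a' i * b' i)) (Real.sqrt (a' j * b' j)) ≥
        max (‖z' i‖) (‖z' j‖))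
    (hS1'' : ∀ i j : Fin 4, i ≠ j →
      min (Real.sqrt (a'' i * b'' i)) (Real.sqrt (a'' j * b'' j)) ≥
        max (‖z'' i‖) (‖z'' j‖)) :
    ∃ c : ℝ, 0 ≤ c ∧
      ((a' = c • a'' ∧ b' = c • b'' ∧ z' = (c : ℝ) • z'') ∨
       (a'' = c • a' ∧ b'' = c • b' ∧ z'' = (c : ℝ) • z')) :=
  extreme_S3e_in_PPT_general a b a' b' a'' b'' z z' z'' hunit ha' hb' ha'' hb'' hsum hS1' hS1''
end

section
/- Let r > 0, θ ∈ ℝ, and set (s,t,u) with s₁ = r, t₁ = 1/r, u₄ = e^{iθ}, and all other coordinates zero. Suppose (s,t,u) = (s',t',u') + (s'',t'',u'') with nonnegative s-, t-components such that both summands satisfy Σᵢ √(s'ᵢt'ᵢ) ≥ Σᵢ |u'ᵢ| and Σᵢ √(s''ᵢt''ᵢ) ≥ Σᵢ |u''ᵢ|. Then one summand is a nonnegative multiple of the other. -/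
/-!
Write `a, b` and `c, d` for the diagonal entries of the two summands, so that `a + c = r` and
`b + d = r⁻¹`, and `z, w` for their fourth `u`-coordinates. Then
`1 = ‖z + w‖ ≤ ‖z‖ + ‖w‖ ≤ √(ab) + √(cd) ≤ √((a + c)(b + d)) = 1`, the last step by
Cauchy–Schwarz, so every inequality is an equality. Equality in Cauchy–Schwarz forces
`ad = bc`, hence `(a, b) = λ (r, r⁻¹)` with `λ = √(ab) = ‖z‖`; equality in the triangle inequality
forces `z = ‖z‖ (z + w)`, and the remaining coordinates of `u'` vanish. So each summand is a
nonnegative multiple of the witness itself, and two such multiples lie on a common ray.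
-/

theorem Real.sqrt_mul_add_sqrt_mul_le {a b c d : ℝ} (ha : 0 ≤ a) (hb : 0 ≤ b) (hc : 0 ≤ c)
    (hd : 0 ≤ d) : √(a * b) + √(c * d) ≤ √((a + c) * (b + d)) := by
  have hprod : √(a * b) * √(c * d) = √(a * d) * √(b * c) := by
    rw [← Real.sqrt_mul (by positivity), ← Real.sqrt_mul (by positivity)]; ring_nf
  -- after squaring, this is AM-GM for `ad` and `bc`
  rw [Real.le_sqrt (by positivity) (by positivity)]
  nlinarith [Real.sq_sqrt (mul_nonneg ha hb), Real.sq_sqrt (mul_nonneg hc hd),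
    Real.sq_sqrt (mul_nonneg ha hd), Real.sq_sqrt (mul_nonneg hb hc),
    sq_nonneg (√(a * d) - √(b * c))]

theorem Real.mul_eq_mul_of_sqrt_mul_le_sqrt_mul_add_sqrt_mul {a b c d : ℝ} (ha : 0 ≤ a)
    (hb : 0 ≤ b) (hc : 0 ≤ c) (hd : 0 ≤ d)
    (h : √((a + c) * (b + d)) ≤ √(a * b) + √(c * d)) : a * d = b * c := by
  have hsq := (Real.sqrt_le_left (by positivity)).1 h
  have hprod : (√(a * b) * √(c * d)) ^ 2 = (a * d) * (b * c) := by
    rw [mul_pow, Real.sq_sqrt (by positivity), Real.sq_sqrt (by positivity)]; ring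
  have hmean : a * d + b * c ≤ 2 * (√(a * b) * √(c * d)) := by
    nlinarith [Real.sq_sqrt (mul_nonneg ha hb), Real.sq_sqrt (mul_nonneg hc hd)]
  -- `(ad - bc)² = (ad + bc)² - 4 (ad)(bc) ≤ (2 √(ab) √(cd))² - 4 (√(ab) √(cd))² = 0`
  nlinarith [mul_self_le_mul_self (by positivity) hmean]

theorem SameRay.norm_smul_add {E : Type*} [SeminormedAddCommGroup E] [NormedSpace ℝ E]
    {x y : E} (h : SameRay ℝ x y) : ‖x‖ • (x + y) = ‖x + y‖ • x := by
  obtain ⟨α, -, hα, -, -, hx, -⟩ := h.exists_eq_smul_add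
  have hnorm : ‖x‖ = α * ‖x + y‖ := by
    conv_lhs => rw [hx]
    rw [norm_smul, Real.norm_of_nonneg hα]
  rw [hnorm, mul_comm, mul_smul, ← hx]

theorem Fintype.eq_zero_of_sum_le_apply {ι : Type*} [Fintype ι] {f : ι → ℝ} (hf : ∀ i, 0 ≤ f i)
    {j : ι} (h : ∑ i, f i ≤ f j) {i : ι} (hi : i ≠ j) : f i = 0 := by
  classical
  rw [← Finset.add_sum_erase _ _ (Finset.mem_univ j)] at h
  have hrest : ∑ k ∈ Finset.univ.erase j, f k = 0 :=
    le_antisymm (by linarith) (Finset.sum_nonneg fun k _ => hf k)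
  exact (Finset.sum_eq_zero_iff_of_nonneg fun k _ => hf k).1 hrest i (by simp [hi])

theorem SameRay.exists_nonneg_smul_eq_or {R M : Type*} [Field R] [LinearOrder R]
    [IsStrictOrderedRing R] [AddCommGroup M] [Module R M] {x y : M} (h : SameRay R x y) :
    ∃ c : R, 0 ≤ c ∧ (x = c • y ∨ y = c • x) := by
  obtain rfl | hx := eq_or_ne x 0
  · exact ⟨0, le_rfl, Or.inl (zero_smul R y).symm⟩
  · obtain ⟨c, hc, rfl⟩ := h.exists_nonneg_left hx
    exact ⟨c, hc, Or.inr rfl⟩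

theorem eq_smul_of_apply_eq_of_forall_ne {ι R M : Type*} [Zero R] [Zero M] [SMulWithZero R M]
    {f g : ι → M} {c : R} {j : ι} (hj : f j = c • g j) (hf : ∀ i, i ≠ j → f i = 0)
    (hg : ∀ i, i ≠ j → g i = 0) : f = c • g := by
  funext i
  by_cases hi : i = j
  · subst hi; exact hj
  · simp [hf i hi, hg i hi]

section Witness

variable {E : Type*} [NormedAddCommGroup E] [NormedSpace ℝ E] [StrictConvexSpace ℝ E]

/-- The chain `1 = ‖z + w‖ ≤ p + q ≤ √(ab) + √(cd) ≤ √((a + c)(b + d)) = 1` is tight. -/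
theorem eq_of_norm_add_eq_one_of_le_sqrt_mul {r a b c d p q : ℝ} {z w : E} (hr : 0 < r)
    (ha : 0 ≤ a) (hb : 0 ≤ b) (hc : 0 ≤ c) (hd : 0 ≤ d) (hac : a + c = r) (hbd : b + d = r⁻¹)
    (hzw : ‖z + w‖ = 1) (hzp : ‖z‖ ≤ p) (hwq : ‖w‖ ≤ q) (hpa : p ≤ √(a * b))
    (hqc : q ≤ √(c * d)) :
    p = ‖z‖ ∧ a = ‖z‖ * r ∧ b = ‖z‖ * r⁻¹ ∧ z = ‖z‖ • (z + w) := by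
  have hprod : √((a + c) * (b + d)) = 1 := by
    rw [hac, hbd, mul_inv_cancel₀ hr.ne', Real.sqrt_one]
  have hCS := Real.sqrt_mul_add_sqrt_mul_le ha hb hc hd
  have htri := norm_add_le z w
  have had : a * d = b * c :=
    Real.mul_eq_mul_of_sqrt_mul_le_sqrt_mul_add_sqrt_mul ha hb hc hd (by linarith)
  have hb' : b = a / r ^ 2 := by
    rw [← sub_eq_iff_eq_add'.2 hac.symm, ← sub_eq_iff_eq_add'.2 hbd.symm] at had
    field_simp at had
    rw [eq_div_iff (by positivity)]
    linarith
  have hz : ‖z‖ = a / r := by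
    rw [show ‖z‖ = √(a * b) by linarith, hb', show a * (a / r ^ 2) = (a / r) ^ 2 by ring,
      Real.sqrt_sq (by positivity)]
  refine ⟨by linarith, by rw [hz]; field_simp, by rw [hz, hb']; field_simp, ?_⟩
  have hray : SameRay ℝ z w := sameRay_iff_norm_add.2 (by linarith)
  rw [hray.norm_smul_add, hzw, one_smul]

variable {ι : Type*} [Fintype ι]

theorem exists_eq_smul_of_sum_norm_le_sum_sqrt_mul {r : ℝ} (hr : 0 < r) {i₀ j₀ : ι}
    {s t s' t' s'' t'' : ι → ℝ} {u u' u'' : ι → E}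
    (hs : s i₀ = r) (ht : t i₀ = r⁻¹) (hu : ‖u j₀‖ = 1)
    (hs0 : ∀ i, i ≠ i₀ → s i = 0) (ht0 : ∀ i, i ≠ i₀ → t i = 0) (hu0 : ∀ i, i ≠ j₀ → u i = 0)
    (hs' : ∀ i, 0 ≤ s' i) (ht' : ∀ i, 0 ≤ t' i) (hs'' : ∀ i, 0 ≤ s'' i) (ht'' : ∀ i, 0 ≤ t'' i)
    (hS : s = s' + s'') (hT : t = t' + t'') (hU : u = u' + u'')
    (hW' : ∑ i, ‖u' i‖ ≤ ∑ i, √(s' i * t' i)) (hW'' : ∑ i, ‖u'' i‖ ≤ ∑ i, √(s'' i * t'' i)) :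
    ∃ α : ℝ, 0 ≤ α ∧ (s', t', u') = α • (s, t, u) := by
  subst hS hT hU
  have hs0' : ∀ i, i ≠ i₀ → s' i = 0 ∧ s'' i = 0 := fun i hi =>
    (add_eq_zero_iff_of_nonneg (hs' i) (hs'' i)).1 (hs0 i hi)
  have ht0' : ∀ i, i ≠ i₀ → t' i = 0 ∧ t'' i = 0 := fun i hi =>
    (add_eq_zero_iff_of_nonneg (ht' i) (ht'' i)).1 (ht0 i hi)
  have hsqrt' : ∑ i, √(s' i * t' i) = √(s' i₀ * t' i₀) :=
    Fintype.sum_eq_single i₀ fun i hi => by simp [(hs0' i hi).1]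
  have hsqrt'' : ∑ i, √(s'' i * t'' i) = √(s'' i₀ * t'' i₀) :=
    Fintype.sum_eq_single i₀ fun i hi => by simp [(hs0' i hi).2]
  obtain ⟨hp, ha, hb, hz⟩ := eq_of_norm_add_eq_one_of_le_sqrt_mul hr (hs' i₀) (ht' i₀)
    (hs'' i₀) (ht'' i₀) hs ht hu
    (Finset.single_le_sum (fun i _ => norm_nonneg (u' i)) (Finset.mem_univ j₀))
    (Finset.single_le_sum (fun i _ => norm_nonneg (u'' i)) (Finset.mem_univ j₀))
    (hW'.trans_eq hsqrt') (hW''.trans_eq hsqrt'')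
  have hu0' : ∀ i, i ≠ j₀ → u' i = 0 := fun i hi =>
    norm_eq_zero.1 (Fintype.eq_zero_of_sum_le_apply (fun i => norm_nonneg _) hp.le hi)
  refine ⟨‖u' j₀‖, norm_nonneg _, ?_⟩
  simp only [Prod.smul_mk, Prod.mk.injEq]
  exact ⟨eq_smul_of_apply_eq_of_forall_ne (by rw [smul_eq_mul, hs, ha])
      (fun i hi => (hs0' i hi).1) hs0,
    eq_smul_of_apply_eq_of_forall_ne (by rw [smul_eq_mul, ht, hb])
      (fun i hi => (ht0' i hi).1) ht0,
    eq_smul_of_apply_eq_of_forall_ne hz hu0' hu0⟩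

end Witness

theorem extreme_witness_W3 (r θ : ℝ) (hr : 0 < r)
    (s t s' t' s'' t'' : Fin 4 → ℝ) (u u' u'' : Fin 4 → ℂ)
    (hs1 : s 0 = r) (ht1 : t 0 = 1 / r)
    (hu4 : u 3 = Complex.exp (θ * Complex.I))
    (hs0 : ∀ i, i ≠ 0 → s i = 0) (ht0 : ∀ i, i ≠ 0 → t i = 0)
    (hu0 : ∀ i, i ≠ 3 → u i = 0)
    (hs' : ∀ i, 0 ≤ s' i) (ht' : ∀ i, 0 ≤ t' i)
    (hs'' : ∀ i, 0 ≤ s'' i) (ht'' : ∀ i, 0 ≤ t'' i)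
    (hsum : s = s' + s'' ∧ t = t' + t'' ∧ u = u' + u'')
    (hW3' : ∑ i, Real.sqrt (s' i * t' i) ≥ ∑ i, ‖u' i‖)
    (hW3'' : ∑ i, Real.sqrt (s'' i * t'' i) ≥ ∑ i, ‖u'' i‖) :
    ∃ c : ℝ, 0 ≤ c ∧
      ((s' = c • s'' ∧ t' = c • t'' ∧ u' = (c : ℝ) • u'') ∨
       (s'' = c • s' ∧ t'' = c • t' ∧ u'' = (c : ℝ) • u')) := by
  obtain ⟨hS, hT, hU⟩ := hsum
  have ht : t 0 = r⁻¹ := by rw [ht1, one_div]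
  have hu : ‖u 3‖ = 1 := by rw [hu4, Complex.norm_exp_ofReal_mul_I]
  obtain ⟨α, hα, h'⟩ := exists_eq_smul_of_sum_norm_le_sum_sqrt_mul hr hs1 ht hu hs0 ht0 hu0
    hs' ht' hs'' ht'' hS hT hU hW3' hW3''
  obtain ⟨β, hβ, h''⟩ := exists_eq_smul_of_sum_norm_le_sum_sqrt_mul hr hs1 ht hu hs0 ht0 hu0
    hs'' ht'' hs' ht' (hS.trans (add_comm _ _)) (hT.trans (add_comm _ _))
    (hU.trans (add_comm _ _)) hW3'' hW3'
  have hray : SameRay ℝ (s', t', u') (s'', t'', u'') := by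
    rw [h', h'']
    exact (SameRay.sameRay_nonneg_smul_left _ hα).nonneg_smul_right hβ
  obtain ⟨c, hc, h⟩ := hray.exists_nonneg_smul_eq_or
  exact ⟨c, hc, by simpa only [Prod.smul_mk, Prod.mk.injEq] using h⟩
end
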